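/- arXiv:2107.06874 — 3 statements merged into one kernel-verified Lean document; each statement's English description precedes it below -/
import Mathlib

section
/- For reals q > p ≥ 0, ∫_{0}^{+∞} (e^{-p x²} - e^{-q x²})/x² dx = √π (√q - √p). -/
/-! Writing the integrand as `∫ t in p..q, exp (-t * x ^ 2)` and exchanging the order of
integration (Fubini) turns the integral into `∫ t in p..q, √π / (2 √t) = √π (√q - √p)`. -/

open MeasureTheory Real Set Function intervalIntegral

theorem integral_exp_neg_mul_sq_eq_div {x : ℝ} (hx : x ≠ 0) (p q : ℝ) :
    ∫ t in p..q, exp (-t * x ^ 2) = (exp (-p * x ^ 2) - exp (-q * x ^ 2)) / x ^ 2 := by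
  have hx2 : -x ^ 2 ≠ 0 := by simpa using hx
  simp_rw [show ∀ t : ℝ, -t * x ^ 2 = -x ^ 2 * t from fun t ↦ by ring]
  rw [integral_comp_mul_left (fun t ↦ exp t) hx2, integral_exp, smul_eq_mul]
  field_simp
  ring

theorem integral_gaussian_Ioi_eq_rpow {t : ℝ} (ht : 0 < t) :
    ∫ x in Ioi (0 : ℝ), exp (-t * x ^ 2) = √π / 2 * t ^ (-(1 / 2 : ℝ)) := by
  rw [integral_gaussian_Ioi, sqrt_div pi_pos.le, sqrt_eq_rpow t, rpow_neg ht.le]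
  field_simp

theorem integral_rpow_neg_half (p q : ℝ) :
    ∫ t in p..q, t ^ (-(1 / 2 : ℝ)) = 2 * (√q - √p) := by
  rw [integral_rpow (Or.inl (by norm_num)), sqrt_eq_rpow q, sqrt_eq_rpow p]
  norm_num
  ring

theorem integrable_exp_neg_mul_sq_prod_Ioc {p : ℝ} (hp : 0 ≤ p) (q : ℝ) :
    Integrable (uncurry fun x t : ℝ ↦ exp (-t * x ^ 2))
      ((volume.restrict (Ioi 0)).prod (volume.restrict (Ioc p q))) := by
  have hcont : Continuous (uncurry fun x t : ℝ ↦ exp (-t * x ^ 2)) := by fun_prop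
  rw [integrable_prod_iff' hcont.aestronglyMeasurable]
  constructor
  · filter_upwards [ae_restrict_mem measurableSet_Ioc] with t ht
    exact (integrable_exp_neg_mul_sq (hp.trans_lt ht.1)).integrableOn
  · have hrpow : IntegrableOn (fun t : ℝ ↦ √π / 2 * t ^ (-(1 / 2 : ℝ))) (Ioc p q) :=
      ((intervalIntegrable_rpow' (by norm_num)).const_mul _).def'.mono_set Ioc_subset_uIoc
    refine hrpow.congr_fun (fun t ht ↦ ?_) measurableSet_Ioc
    simp only [uncurry_apply_pair, norm_of_nonneg (exp_pos _).le]
    exact (integral_gaussian_Ioi_eq_rpow (hp.trans_lt ht.1)).symm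

theorem gaussian_frullani (p q : ℝ) (hp : 0 ≤ p) (hpq : p < q) :
    ∫ x in Set.Ioi (0 : ℝ), (Real.exp (-p * x ^ 2) - Real.exp (-q * x ^ 2)) / x ^ 2
      = Real.sqrt Real.pi * (Real.sqrt q - Real.sqrt p) := by
  calc ∫ x in Ioi (0 : ℝ), (exp (-p * x ^ 2) - exp (-q * x ^ 2)) / x ^ 2
      = ∫ x in Ioi (0 : ℝ), ∫ t in Ioc p q, exp (-t * x ^ 2) := by
        refine setIntegral_congr_fun measurableSet_Ioi fun x hx ↦ ?_
        rw [← integral_of_le hpq.le, integral_exp_neg_mul_sq_eq_div hx.ne']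
    _ = ∫ t in Ioc p q, ∫ x in Ioi (0 : ℝ), exp (-t * x ^ 2) :=
        integral_integral_swap (integrable_exp_neg_mul_sq_prod_Ioc hp q)
    _ = ∫ t in Ioc p q, √π / 2 * t ^ (-(1 / 2 : ℝ)) :=
        setIntegral_congr_fun measurableSet_Ioc fun t ht ↦
          integral_gaussian_Ioi_eq_rpow (hp.trans_lt ht.1)
    _ = √π * (√q - √p) := by
        rw [← integral_of_le hpq.le, intervalIntegral.integral_const_mul, integral_rpow_neg_half]
        ring
end

section
/- For c > 0, p > 0, and A an n×n symmetric positive definite real matrix, ∫_{ℝⁿ} e^{-(c⟨Ax,x⟩)^p} dx = (π/c)^{n/2} · (1/√(det A)) · Γ(n/(2p) + 1)/Γ(n/2 + 1). -/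
/-!
Write `c • A = Mᵀ M`; the substitution `y = M x`, of Jacobian `|det M| = √(det (c • A))`, turns
the integral into `∫ exp (-‖y‖ ^ (2p))` over Euclidean space. For every exponent `q > 0` the
layer-cake formula gives `∫ exp (-‖y‖ ^ q) = vol (unit ball) * Γ(n / q + 1)`, so comparing `q = 2p`
with the Gaussian case `q = 2`, where the integral is `π ^ (n / 2)`, eliminates the volume of the
ball.
-/

open MeasureTheory Module Real Matrix

theorem integral_exp_neg_norm_rpow {V : Type*} [NormedAddCommGroup V] [InnerProductSpace ℝ V]
    [FiniteDimensional ℝ V] [MeasurableSpace V] [BorelSpace V] {p : ℝ} (hp : 0 < p) :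
    ∫ v : V, exp (-‖v‖ ^ p) =
      π ^ (finrank ℝ V / 2 : ℝ) * (Gamma (finrank ℝ V / p + 1) / Gamma (finrank ℝ V / 2 + 1)) := by
  have hgauss : ∫ v : V, exp (-‖v‖ ^ (2 : ℝ)) = π ^ (finrank ℝ V / 2 : ℝ) := by
    simpa [rpow_two] using GaussianFourier.integral_rexp_neg_mul_sq_norm (V := V) one_pos
  have hball := (measure_unitBall_eq_integral_div_gamma (volume : Measure V) hp).symm.trans
    (measure_unitBall_eq_integral_div_gamma (volume : Measure V) two_pos)
  rw [ENNReal.ofReal_eq_ofReal_iff (by positivity) (by positivity), hgauss] at hball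
  have hGamma : 0 < Gamma (finrank ℝ V / p + 1) := Gamma_pos_of_pos (by positivity)
  rw [mul_div_assoc', mul_div_right_comm, ← hball, div_mul_cancel₀ _ hGamma.ne']

theorem EuclideanSpace.norm_toLp_sq {ι : Type*} [Fintype ι] (y : ι → ℝ) :
    ‖WithLp.toLp 2 y‖ ^ 2 = y ⬝ᵥ y := by
  rw [← real_inner_self_eq_norm_sq, EuclideanSpace.inner_eq_star_dotProduct]
  simp

namespace Matrix

variable {ι : Type*} [Fintype ι] [DecidableEq ι]

theorem integral_comp_mulVec {E : Type*} [NormedAddCommGroup E] [NormedSpace ℝ E]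
    {M : Matrix ι ι ℝ} (hM : M.det ≠ 0) (f : (ι → ℝ) → E) :
    ∫ x, f (M *ᵥ x) = |M.det|⁻¹ • ∫ y, f y := by
  have hemb : MeasurableEmbedding (toLin' M) := by
    refine (LinearMap.isClosedEmbedding_of_injective ?_).measurableEmbedding
    exact LinearMap.ker_eq_bot.mpr (mulVec_injective_iff_isUnit.mpr
      ((isUnit_iff_isUnit_det M).mpr hM.isUnit))
  change ∫ x, f (toLin' M x) = _
  rw [← hemb.integral_map, Real.map_matrix_volume_pi_eq_smul_volume_pi hM, integral_smul_measure,
    ENNReal.toReal_ofReal (abs_nonneg _), abs_inv]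

theorem PosSemidef.exists_mulVec_dotProduct_mulVec_eq {Q : Matrix ι ι ℝ} (hQ : Q.PosSemidef) :
    ∃ M : Matrix ι ι ℝ, (∀ x, M *ᵥ x ⬝ᵥ M *ᵥ x = Q *ᵥ x ⬝ᵥ x) ∧ |M.det| = √Q.det := by
  open scoped MatrixOrder in
  obtain ⟨M, rfl⟩ := CStarAlgebra.nonneg_iff_eq_star_mul_self.mp hQ.nonneg
  refine ⟨M, fun x => ?_, ?_⟩
  · rw [← mulVec_mulVec, dotProduct_comm, dotProduct_mulVec, star_eq_conjTranspose,
      conjTranspose_eq_transpose_of_trivial, mulVec_transpose]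
  · rw [star_eq_conjTranspose, det_mul, det_conjTranspose, star_trivial, ← sq, sqrt_sq_eq_abs]

theorem PosDef.integral_exp_neg_dotProduct_mulVec_rpow {Q : Matrix ι ι ℝ} (hQ : Q.PosDef)
    {p : ℝ} (hp : 0 < p) :
    ∫ x : ι → ℝ, exp (-(Q *ᵥ x ⬝ᵥ x) ^ p) = π ^ (Fintype.card ι / 2 : ℝ) / √Q.det *
      (Gamma (Fintype.card ι / (2 * p) + 1) / Gamma (Fintype.card ι / 2 + 1)) := by
  obtain ⟨M, hM, hdet⟩ := hQ.posSemidef.exists_mulVec_dotProduct_mulVec_eq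
  have hM0 : M.det ≠ 0 := abs_pos.mp (hdet ▸ sqrt_pos.mpr hQ.det_pos)
  have hnorm (x : ι → ℝ) : (Q *ᵥ x ⬝ᵥ x) ^ p = ‖WithLp.toLp 2 (M *ᵥ x)‖ ^ (2 * p) := by
    rw [rpow_mul (norm_nonneg _), rpow_two, EuclideanSpace.norm_toLp_sq, hM]
  calc ∫ x : ι → ℝ, exp (-(Q *ᵥ x ⬝ᵥ x) ^ p)
      = |M.det|⁻¹ * ∫ y : ι → ℝ, exp (-‖WithLp.toLp 2 y‖ ^ (2 * p)) := by
        simp_rw [hnorm]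
        exact integral_comp_mulVec hM0 fun y => exp (-‖WithLp.toLp 2 y‖ ^ (2 * p))
    _ = |M.det|⁻¹ * ∫ v : EuclideanSpace ℝ ι, exp (-‖v‖ ^ (2 * p)) := by
        congr 1
        exact (EuclideanSpace.volume_preserving_symm_measurableEquiv_toLp ι).symm.integral_comp'
          fun v => exp (-‖v‖ ^ (2 * p))
    _ = _ := by
        rw [integral_exp_neg_norm_rpow (by positivity), finrank_euclideanSpace, hdet]
        ring

end Matrix

theorem gaussian_integral_homogeneous (n : ℕ) (c p : ℝ) (hc : 0 < c) (hp : 0 < p)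
    (A : Matrix (Fin n) (Fin n) ℝ) (hA : A.PosDef) :
    ∫ x : Fin n → ℝ, Real.exp (-(c * dotProduct (A.mulVec x) x) ^ p)
      = (Real.pi / c) ^ ((n : ℝ) / 2) * (1 / Real.sqrt A.det)
          * (Real.Gamma ((n : ℝ) / (2 * p) + 1) / Real.Gamma ((n : ℝ) / 2 + 1)) := by
  have hquad (x : Fin n → ℝ) : c * (A *ᵥ x ⬝ᵥ x) = (c • A) *ᵥ x ⬝ᵥ x := by
    rw [smul_mulVec, smul_dotProduct, smul_eq_mul]
  have hdet : √(c • A).det = c ^ (n / 2 : ℝ) * √A.det := by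
    rw [det_smul, Fintype.card_fin, sqrt_mul (by positivity), sqrt_eq_rpow, ← rpow_natCast,
      ← rpow_mul hc.le, mul_one_div]
  simp_rw [hquad]
  rw [(hA.smul hc).integral_exp_neg_dotProduct_mulVec_rpow hp, Fintype.card_fin, hdet,
    div_rpow pi_pos.le hc.le]
  ring
end

section
/- For positive reals a, b and points A, B, C ∈ ℝ³, let p = a+b, P = (aA + bB)/p, S = ‖A-B‖², and F₀(x) = ∫₀¹ e^{-x t²} dt. Then ∫_{ℝ³} e^{-a‖r-A‖²} e^{-b‖r-B‖²} / ‖r-C‖ dr = (2π/p) · e^{-(ab/p) S} · F₀(p ‖C-P‖²). -/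
/-!
Write `1/‖r‖ = (2/√π) ∫₀^∞ exp(-u²‖r‖²) du`. The Gaussian product theorem merges the two
Gaussians into one of exponent `p = a + b` centred at `P`, and after Tonelli the inner integral over
`r` is again a product of two Gaussians, equal to `(π/(p+u²))^{3/2} exp(-p u²‖C-P‖²/(p+u²))`.
The substitution `t = u/√(p+u²)`, a bijection of `(0,∞)` onto `(0,1)` with derivative
`p/(p+u²)^{3/2}`, turns the remaining `u`-integral into `(2π/p) ∫₀¹ exp(-p‖C-P‖² t²) dt`.
-/

open MeasureTheory Real Set Module

section GaussianProduct

variable {F : Type*} [NormedAddCommGroup F] [InnerProductSpace ℝ F]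

theorem mul_norm_sub_sq_add_mul_norm_sub_sq {a b : ℝ} (hab : a + b ≠ 0) (r A B : F) :
    a * ‖r - A‖ ^ 2 + b * ‖r - B‖ ^ 2
      = (a + b) * ‖r - (a + b)⁻¹ • (a • A + b • B)‖ ^ 2 + a * b / (a + b) * ‖A - B‖ ^ 2 := by
  have h_center : r - (a + b)⁻¹ • (a • A + b • B) = (a + b)⁻¹ • (a • (r - A) + b • (r - B)) := by
    conv_lhs => rw [← inv_smul_smul₀ hab r]
    module
  rw [h_center, show A - B = (r - B) - (r - A) by abel]
  generalize r - A = x, r - B = y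
  rw [norm_smul, mul_pow, norm_add_sq_real, norm_sub_sq_real, norm_smul, norm_smul,
    real_inner_smul_left, real_inner_smul_right, real_inner_comm y x]
  simp only [norm_inv, Real.norm_eq_abs, mul_pow, inv_pow, sq_abs]
  field_simp
  ring

theorem exp_mul_exp_eq_exp_mul_exp_norm_sub_sq {a b : ℝ} (hab : a + b ≠ 0) (r A B : F) :
    rexp (-a * ‖r - A‖ ^ 2) * rexp (-b * ‖r - B‖ ^ 2)
      = rexp (-(a * b / (a + b)) * ‖A - B‖ ^ 2)
          * rexp (-(a + b) * ‖r - (a + b)⁻¹ • (a • A + b • B)‖ ^ 2) := by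
  rw [← Real.exp_add, ← Real.exp_add]
  congr 1
  linear_combination -mul_norm_sub_sq_add_mul_norm_sub_sq hab r A B

end GaussianProduct

section GaussianIntegral

variable {V : Type*} [NormedAddCommGroup V] [InnerProductSpace ℝ V] [FiniteDimensional ℝ V]
  [MeasurableSpace V] [BorelSpace V]

theorem integrable_exp_neg_mul_norm_sub_sq {c : ℝ} (hc : 0 < c) (q : V) :
    Integrable fun r : V ↦ rexp (-c * ‖r - q‖ ^ 2) := by
  have h := (GaussianFourier.integrable_cexp_neg_mul_sq_norm_add (V := V)
    (b := c) (by simpa using hc) 0 0).re.comp_sub_right q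
  refine h.congr (.of_forall fun r ↦ ?_)
  simp [← Complex.ofReal_pow, ← Complex.ofReal_neg, ← Complex.ofReal_mul, Complex.exp_ofReal_re]

theorem integral_exp_neg_mul_norm_sub_sq {c : ℝ} (hc : 0 < c) (q : V) :
    ∫ r : V, rexp (-c * ‖r - q‖ ^ 2) = (π / c) ^ (finrank ℝ V / 2 : ℝ) := by
  rw [integral_sub_right_eq_self (fun r : V ↦ rexp (-c * ‖r‖ ^ 2)) q,
    GaussianFourier.integral_rexp_neg_mul_sq_norm hc]

theorem lintegral_exp_mul_exp_neg_mul_norm_sub_sq {a b : ℝ} (hab : 0 < a + b) (A B : V) :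
    ∫⁻ r : V, ENNReal.ofReal (rexp (-a * ‖r - A‖ ^ 2) * rexp (-b * ‖r - B‖ ^ 2))
      = ENNReal.ofReal (rexp (-(a * b / (a + b)) * ‖A - B‖ ^ 2)
          * (π / (a + b)) ^ (finrank ℝ V / 2 : ℝ)) := by
  simp_rw [exp_mul_exp_eq_exp_mul_exp_norm_sub_sq hab.ne']
  rw [← ofReal_integral_eq_lintegral_ofReal
      ((integrable_exp_neg_mul_norm_sub_sq hab _).const_mul _) (.of_forall fun r ↦ by positivity),
    integral_const_mul, integral_exp_neg_mul_norm_sub_sq hab]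

end GaussianIntegral

theorem ofReal_inv_eq_lintegral_exp_neg_sq_mul_sq {x : ℝ} (hx : 0 < x) :
    ENNReal.ofReal x⁻¹ = ∫⁻ u in Ioi 0, ENNReal.ofReal (2 / √π * rexp (-x ^ 2 * u ^ 2)) := by
  rw [← ofReal_integral_eq_lintegral_ofReal
      ((integrableOn_Ioi_exp_neg_mul_sq_iff.mpr (by positivity)).const_mul _)
      (.of_forall fun u ↦ by positivity),
    integral_const_mul, integral_gaussian_Ioi, sqrt_div pi_pos.le, sqrt_sq hx.le]
  congr 1
  have : 0 < √π := sqrt_pos.2 pi_pos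
  field_simp

section CoulombGaussian

variable {V : Type*} [NormedAddCommGroup V] [InnerProductSpace ℝ V] [FiniteDimensional ℝ V]
  [MeasurableSpace V] [BorelSpace V] [Nontrivial V]

theorem lintegral_exp_neg_mul_norm_sub_sq_div_norm {p : ℝ} (hp : 0 < p) (w : V) :
    ∫⁻ r : V, ENNReal.ofReal (rexp (-p * ‖r - w‖ ^ 2) / ‖r‖)
      = ∫⁻ u in Ioi 0, ENNReal.ofReal (2 / √π)
          * ENNReal.ofReal (rexp (-(p * u ^ 2 / (p + u ^ 2)) * ‖w‖ ^ 2)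
            * (π / (p + u ^ 2)) ^ (finrank ℝ V / 2 : ℝ)) := by
  -- `‖r - 0‖`: the `r`-integrand is then a Gaussian product with second centre `0`
  have h_inv : ∀ᵐ r : V, ENNReal.ofReal (rexp (-p * ‖r - w‖ ^ 2) / ‖r‖)
      = ∫⁻ u in Ioi 0, ENNReal.ofReal (2 / √π)
          * ENNReal.ofReal (rexp (-p * ‖r - w‖ ^ 2) * rexp (-u ^ 2 * ‖r - 0‖ ^ 2)) := by
    filter_upwards [Measure.ae_ne volume 0] with r hr
    rw [div_eq_mul_inv, ENNReal.ofReal_mul (exp_pos _).le,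
      ofReal_inv_eq_lintegral_exp_neg_sq_mul_sq (norm_pos_iff.2 hr),
      ← lintegral_const_mul' _ _ ENNReal.ofReal_ne_top]
    refine setLIntegral_congr_fun measurableSet_Ioi fun u _ ↦ ?_
    rw [← ENNReal.ofReal_mul (exp_pos _).le, ← ENNReal.ofReal_mul (by positivity), sub_zero]
    ring_nf
  have h_meas : AEMeasurable (Function.uncurry fun (r : V) (u : ℝ) ↦ ENNReal.ofReal (2 / √π)
      * ENNReal.ofReal (rexp (-p * ‖r - w‖ ^ 2) * rexp (-u ^ 2 * ‖r - 0‖ ^ 2)))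
      (volume.prod (volume.restrict (Ioi 0))) := by
    fun_prop
  rw [lintegral_congr_ae h_inv, lintegral_lintegral_swap h_meas]
  refine setLIntegral_congr_fun measurableSet_Ioi fun u _ ↦ ?_
  rw [lintegral_const_mul' _ _ ENNReal.ofReal_ne_top,
    lintegral_exp_mul_exp_neg_mul_norm_sub_sq (by positivity), sub_zero]

end CoulombGaussian

section Substitution

variable {p : ℝ}

theorem hasDerivAt_div_sqrt_add_sq (hp : 0 < p) (u : ℝ) :
    HasDerivAt (fun u ↦ u / √(p + u ^ 2)) (p / ((p + u ^ 2) * √(p + u ^ 2))) u := by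
  have hpos : 0 < p + u ^ 2 := by positivity
  have h_sqrt : HasDerivAt (fun u ↦ √(p + u ^ 2)) (1 / (2 * √(p + u ^ 2)) * (2 * u)) u :=
    (hasDerivAt_sqrt hpos.ne').comp u (by simpa using (hasDerivAt_pow 2 u).const_add p)
  refine ((hasDerivAt_id' u).div h_sqrt (sqrt_pos.2 hpos).ne').congr_deriv ?_
  have hsq : √(p + u ^ 2) ^ 2 = p + u ^ 2 := sq_sqrt hpos.le
  rw [hsq]
  field_simp
  linear_combination hsq

theorem strictMono_div_sqrt_add_sq (hp : 0 < p) : StrictMono fun u ↦ u / √(p + u ^ 2) :=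
  strictMono_of_deriv_pos fun u ↦ by
    rw [(hasDerivAt_div_sqrt_add_sq hp u).deriv]
    positivity

theorem image_div_sqrt_add_sq_Ioi (hp : 0 < p) :
    (fun u ↦ u / √(p + u ^ 2)) '' Ioi 0 = Ioo 0 1 := by
  ext t
  constructor
  · rintro ⟨u, hu : 0 < u, rfl⟩
    have hsqrt : 0 < √(p + u ^ 2) := by positivity
    refine ⟨div_pos hu hsqrt, (div_lt_one hsqrt).2 (lt_sqrt_of_sq_lt (by linarith))⟩
  · rintro ⟨ht0, ht1⟩
    have h1t : 0 < 1 - t ^ 2 := by nlinarith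
    have hs : √(1 - t ^ 2) ^ 2 = 1 - t ^ 2 := sq_sqrt h1t.le
    have hp' : √p ^ 2 = p := sq_sqrt hp.le
    have hsqrt : 0 < √(1 - t ^ 2) := sqrt_pos.2 h1t
    refine ⟨√p * t / √(1 - t ^ 2), div_pos (mul_pos (sqrt_pos.2 hp) ht0) hsqrt, ?_⟩
    have h_denom : p + (√p * t / √(1 - t ^ 2)) ^ 2 = (√p / √(1 - t ^ 2)) ^ 2 := by
      rw [div_pow, div_pow, mul_pow, hs, hp']
      field_simp
      ring
    simp only [h_denom]
    rw [sqrt_sq (by positivity)]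
    field_simp

theorem lintegral_Ioi_comp_div_sqrt_add_sq (hp : 0 < p) (g : ℝ → ENNReal) :
    ∫⁻ u in Ioi 0, ENNReal.ofReal (p / ((p + u ^ 2) * √(p + u ^ 2))) * g (u / √(p + u ^ 2))
      = ∫⁻ t in Ioo 0 1, g t := by
  rw [← image_div_sqrt_add_sq_Ioi hp, lintegral_image_eq_lintegral_abs_deriv_mul measurableSet_Ioi
    (fun u _ ↦ (hasDerivAt_div_sqrt_add_sq hp u).hasDerivWithinAt)
    (strictMono_div_sqrt_add_sq hp).injective.injOn g]
  refine setLIntegral_congr_fun measurableSet_Ioi fun u _ ↦ ?_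
  rw [abs_of_pos (by positivity)]

end Substitution

theorem integral_exp_neg_mul_norm_sub_sq_div_norm {p : ℝ} (hp : 0 < p)
    (w : EuclideanSpace ℝ (Fin 3)) :
    ∫ r : EuclideanSpace ℝ (Fin 3), rexp (-p * ‖r - w‖ ^ 2) / ‖r‖
      = 2 * π / p * ∫ t in (0 : ℝ)..1, rexp (-(p * ‖w‖ ^ 2) * t ^ 2) := by
  set boys : ℝ → ℝ := fun t ↦ 2 * π / p * rexp (-(p * ‖w‖ ^ 2) * t ^ 2) with h_boys
  have h_kernel (u : ℝ) : 2 / √π * (rexp (-(p * u ^ 2 / (p + u ^ 2)) * ‖w‖ ^ 2)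
        * (π / (p + u ^ 2)) ^ ((3 : ℕ) / 2 : ℝ))
      = p / ((p + u ^ 2) * √(p + u ^ 2)) * boys (u / √(p + u ^ 2)) := by
    have hpos : 0 < p + u ^ 2 := by positivity
    have hsq : √(p + u ^ 2) ^ 2 = p + u ^ 2 := sq_sqrt hpos.le
    have hπ : 0 < √π := sqrt_pos.2 pi_pos
    have h_rpow :
        (π / (p + u ^ 2)) ^ ((3 : ℕ) / 2 : ℝ) = π * √π / ((p + u ^ 2) * √(p + u ^ 2)) := by
      rw [show ((3 : ℕ) / 2 : ℝ) = 1 + 1 / 2 by norm_num, rpow_add (by positivity), rpow_one,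
        ← sqrt_eq_rpow, sqrt_div pi_pos.le]
      field_simp
    simp only [h_rpow, h_boys, div_pow, hsq]
    field_simp
  have h_lintegral :
      ∫⁻ r : EuclideanSpace ℝ (Fin 3), ENNReal.ofReal (rexp (-p * ‖r - w‖ ^ 2) / ‖r‖)
        = ENNReal.ofReal (∫ t in Ioo 0 1, boys t) := by
    rw [lintegral_exp_neg_mul_norm_sub_sq_div_norm hp, finrank_euclideanSpace_fin,
      ofReal_integral_eq_lintegral_ofReal
        ((by fun_prop : Continuous boys).integrableOn_Icc.mono_set Ioo_subset_Icc_self)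
        (.of_forall fun t ↦ by positivity),
      ← lintegral_Ioi_comp_div_sqrt_add_sq hp]
    refine setLIntegral_congr_fun measurableSet_Ioi fun u _ ↦ ?_
    rw [← ENNReal.ofReal_mul (by positivity), h_kernel, ENNReal.ofReal_mul (by positivity)]
  rw [integral_eq_lintegral_of_nonneg_ae (.of_forall fun r ↦ by positivity)
      (by fun_prop : Measurable _).aestronglyMeasurable,
    h_lintegral,
    ENNReal.toReal_ofReal (setIntegral_nonneg measurableSet_Ioo fun t _ ↦ by positivity),
    intervalIntegral.integral_of_le zero_le_one, integral_Ioc_eq_integral_Ioo, integral_const_mul]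

theorem boys_coulomb_integral (a b : ℝ) (ha : 0 < a) (hb : 0 < b)
    (A B C : EuclideanSpace ℝ (Fin 3)) :
    ∫ r : EuclideanSpace ℝ (Fin 3),
        Real.exp (-a * ‖r - A‖ ^ 2) * Real.exp (-b * ‖r - B‖ ^ 2) / ‖r - C‖
      = (2 * Real.pi / (a + b))
          * Real.exp (-(a * b / (a + b)) * ‖A - B‖ ^ 2)
          * ∫ t in (0 : ℝ)..1,
              Real.exp (-((a + b) * ‖C - (a + b)⁻¹ • (a • A + b • B)‖ ^ 2) * t ^ 2) := by
  have hp : 0 < a + b := add_pos ha hb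
  set P := (a + b)⁻¹ • (a • A + b • B)
  simp_rw [exp_mul_exp_eq_exp_mul_exp_norm_sub_sq hp.ne', mul_div_assoc]
  have h_shift : ∫ r : EuclideanSpace ℝ (Fin 3), rexp (-(a + b) * ‖r - P‖ ^ 2) / ‖r - C‖
      = ∫ r : EuclideanSpace ℝ (Fin 3), rexp (-(a + b) * ‖r - (P - C)‖ ^ 2) / ‖r‖ := by
    rw [← integral_sub_right_eq_self
      (fun r ↦ rexp (-(a + b) * ‖r - (P - C)‖ ^ 2) / ‖r‖) C]
    simp only [sub_sub_sub_cancel_right]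
  rw [integral_const_mul, h_shift, integral_exp_neg_mul_norm_sub_sq_div_norm hp, norm_sub_rev P C]
  ring
end
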